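/- For any nonzero complex m and real r, lim over pairwise-distinct triples (m_1, m_2, m_3) → (m, m, m) of ∑_{j=1}^3 exp(-r m_j) ∏_{k≠j} m_k²/(m_k² - m_j²) equals exp(-m r)·(1 + (5/8) m r + (1/8) m² r²). -/

import Mathlib

/-!
With the Lagrange weights `w j = ∏_{k ≠ j} (m_j - m_k)⁻¹`, the sum is the second divided
difference `∑ j, w j * g (m_j)` of `g z = 2 exp (-r z) ∏ m_k² / (z ∏ (z + m_k))`
(`expKernel r f` for the nodes `f = (m_1, m_2, m_3)`), a function holomorphic near `m`.
By the Cauchy integral formula it equals `(2πi)⁻¹ ∮ g z / ∏ (z - m_k) dz` over a fixed circle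
around `m`, an integral that depends continuously on the nodes `m_k`. When all nodes equal
`m`, the Cauchy formula for derivatives turns it into `g'' m / 2`, which is the stated value.
-/

open Finset Filter Topology Metric Complex Real Lagrange

theorem Lagrange.inv_prod_sub_eq_sum_nodalWeight_mul_inv_sub {F ι : Type*} [Field F]
    [DecidableEq ι] {s : Finset ι} {v : ι → F} {x : F} (hvs : Set.InjOn v s)
    (hs : s.Nonempty) (hx : ∀ i ∈ s, x ≠ v i) :
    (∏ i ∈ s, (x - v i))⁻¹ = ∑ i ∈ s, nodalWeight s v i * (x - v i)⁻¹ := by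
  have h := eval_interpolate_not_at_node (1 : ι → F) hx
  simp only [interpolate_one hvs hs, Polynomial.eval_one, eval_nodal, Pi.one_apply,
    mul_one] at h
  exact (eq_inv_of_mul_eq_one_right h.symm).symm

theorem Finset.prod_div_sub_comm {ι K : Type*} [Field K] {s : Finset ι} (hs : Even #s)
    (a b : ι → K) (x : K) :
    ∏ k ∈ s, a k / (x - b k) = ∏ k ∈ s, a k / (b k - x) := by
  rw [← one_mul (∏ k ∈ s, a k / (b k - x)), ← hs.neg_one_pow, ← prod_neg]
  exact prod_congr rfl fun k _ => by rw [← neg_sub, div_neg]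

section CircleIntegral

variable {E : Type*} [NormedAddCommGroup E] [NormedSpace ℂ E]

theorem DifferentiableOn.circleIntegral_inv_prod_sub_smul [CompleteSpace E] {ι : Type*}
    [DecidableEq ι] {g : ℂ → E} {c : ℂ} {R : ℝ} {s : Finset ι} {v : ι → ℂ}
    (hg : DifferentiableOn ℂ g (closedBall c R)) (hv : ∀ i ∈ s, v i ∈ ball c R)
    (hvs : Set.InjOn v s) (hs : s.Nonempty) :
    (∮ z in C(c, R), (∏ i ∈ s, (z - v i))⁻¹ • g z)
      = (2 * π * I : ℂ) • ∑ i ∈ s, nodalWeight s v i • g (v i) := by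
  have hR : 0 ≤ R := by
    obtain ⟨i, hi⟩ := hs
    exact (dist_nonneg.trans_lt (mem_ball.1 (hv i hi))).le
  have hsub : ∀ z ∈ sphere c R, ∀ i ∈ s, z - v i ≠ 0 := fun z hz i hi =>
    sub_ne_zero.2 fun h => (mem_ball.1 (hv i hi)).ne (h ▸ mem_sphere.1 hz)
  have hint : ∀ i ∈ s,
      CircleIntegrable (fun z => nodalWeight s v i • (z - v i)⁻¹ • g z) c R := fun i hi =>
    (((continuousOn_id.sub continuousOn_const).inv₀ fun z hz => hsub z hz i hi).smul
      (hg.continuousOn.mono sphere_subset_closedBall)).const_smul _ |>.circleIntegrable hR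
  calc (∮ z in C(c, R), (∏ i ∈ s, (z - v i))⁻¹ • g z)
      = ∮ z in C(c, R), ∑ i ∈ s, nodalWeight s v i • (z - v i)⁻¹ • g z := by
        refine circleIntegral.integral_congr hR fun z hz => ?_
        simp only [inv_prod_sub_eq_sum_nodalWeight_mul_inv_sub hvs hs
          fun i hi => sub_ne_zero.1 (hsub z hz i hi), sum_smul, mul_smul]
    _ = ∑ i ∈ s, nodalWeight s v i • (2 * π * I : ℂ) • g (v i) := by
        rw [circleIntegral.integral_fun_sum hint]
        refine sum_congr rfl fun i hi => ?_
        rw [circleIntegral.integral_smul, hg.circleIntegral_sub_inv_smul (hv i hi)]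
    _ = (2 * π * I : ℂ) • ∑ i ∈ s, nodalWeight s v i • g (v i) := by
        simp only [smul_sum, smul_comm (nodalWeight s v _)]

theorem tendsto_circleIntegral_of_continuousOn_prod {X : Type*} [UniformSpace X]
    [FirstCountableTopology X] {F : X → ℂ → E} {c : ℂ} {R : ℝ} {K : Set X} {x₀ : X}
    (hK : IsCompact K) (hx₀ : K ∈ 𝓝 x₀) (hR : 0 ≤ R)
    (hF : ContinuousOn ↿F (K ×ˢ sphere c R)) :
    Tendsto (fun x => ∮ z in C(c, R), F x z) (𝓝 x₀) (𝓝 (∮ z in C(c, R), F x₀ z)) := by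
  have hunif := ((hK.prod (isCompact_sphere c R)).uniformContinuousOn_of_continuous
    hF).tendstoUniformlyOn (mem_of_mem_nhds hx₀)
  rw [nhdsWithin_eq_nhds.2 hx₀] at hunif
  refine hunif.tendsto_circleIntegral_of_continuousOn hR ?_
  filter_upwards [hx₀] with x hx
  exact hF.comp (Continuous.prodMk_right x).continuousOn fun z hz => ⟨hx, hz⟩

theorem tendsto_sum_nodalWeight_smul_nhdsWithin_injective [CompleteSpace E] {ι : Type*}
    [Fintype ι] [DecidableEq ι] [Nonempty ι] {G : (ι → ℂ) → ℂ → E} {c : ℂ} {R : ℝ}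
    {K : Set (ι → ℂ)} (hK : IsCompact K) (hcK : K ∈ 𝓝 fun _ => c)
    (hKR : ∀ f ∈ K, ∀ i, f i ∈ ball c R)
    (hGd : ∀ f ∈ K, DifferentiableOn ℂ (G f) (closedBall c R))
    (hGc : ContinuousOn ↿G (K ×ˢ sphere c R)) :
    Tendsto (fun f => ∑ i, nodalWeight univ f i • G f (f i))
      (𝓝[{f | Function.Injective f}] fun _ => c)
      (𝓝 (((Fintype.card ι - 1).factorial : ℂ)⁻¹ •
        iteratedDeriv (Fintype.card ι - 1) (G fun _ => c) c)) := by
  set n := Fintype.card ι - 1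
  have hcard : Fintype.card ι = n + 1 := (Nat.succ_pred_eq_of_pos Fintype.card_pos).symm
  have hR : 0 < R :=
    dist_nonneg.trans_lt (mem_ball.1 (hKR _ (mem_of_mem_nhds hcK) (Classical.arbitrary ι)))
  have hsub : ∀ f ∈ K, ∀ z ∈ sphere c R, ∀ i, z - f i ≠ 0 := fun f hf z hz i =>
    sub_ne_zero.2 fun h => (mem_ball.1 (hKR f hf i)).ne (h ▸ mem_sphere.1 hz)
  have hcont : ContinuousOn (fun p : (ι → ℂ) × ℂ => (∏ i, (p.2 - p.1 i))⁻¹ • G p.1 p.2)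
      (K ×ˢ sphere c R) :=
    ((continuousOn_finsetProd _ fun i _ => by fun_prop).inv₀ fun p hp =>
      prod_ne_zero_iff.2 fun i _ => hsub p.1 hp.1 p.2 hp.2 i).smul hGc
  have hlim := tendsto_circleIntegral_of_continuousOn_prod
    (F := fun f z => (∏ i, (z - f i))⁻¹ • G f z) hK hcK hR.le hcont
  have hconst : (∮ z in C(c, R), (∏ _i : ι, (z - c))⁻¹ • G (fun _ => c) z)
      = (2 * π * I / n.factorial : ℂ) • iteratedDeriv n (G fun _ => c) c := by
    simp only [prod_const, card_univ, hcard, ← one_div]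
    exact (hGd _ (mem_of_mem_nhds hcK)).circleIntegral_one_div_sub_center_pow_smul hR n
  have hval : (2 * π * I : ℂ)⁻¹ • (2 * π * I / n.factorial : ℂ) •
      iteratedDeriv n (G fun _ => c) c
        = (n.factorial : ℂ)⁻¹ • iteratedDeriv n (G fun _ => c) c := by
    rw [smul_smul, div_eq_mul_inv, inv_mul_cancel_left₀ two_pi_I_ne_zero]
  rw [hconst] at hlim
  rw [← hval]
  refine ((hlim.const_smul _).mono_left nhdsWithin_le_nhds).congr' ?_
  filter_upwards [nhdsWithin_le_nhds hcK, self_mem_nhdsWithin] with f hf hinj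
  rw [(hGd f hf).circleIntegral_inv_prod_sub_smul (fun i _ => hKR f hf i) hinj.injOn
    univ_nonempty, inv_smul_smul₀ two_pi_I_ne_zero]

end CircleIntegral

theorem iteratedDeriv_two_eq_of_hasDerivAt_mul {𝕜 : Type*} [NontriviallyNormedField 𝕜]
    {g L : 𝕜 → 𝕜} {c L' : 𝕜} (hg : ∀ᶠ z in 𝓝 c, HasDerivAt g (g z * L z) z)
    (hL : HasDerivAt L L' c) :
    iteratedDeriv 2 g c = g c * (L c ^ 2 + L') := by
  have hderiv : deriv g =ᶠ[𝓝 c] g * L := hg.mono fun z hz => hz.deriv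
  rw [iteratedDeriv_succ, iteratedDeriv_one, hderiv.deriv_eq, (hg.self_of_nhds.mul hL).deriv]
  ring

theorem add_ne_zero_of_dist_add_dist_lt {z w m : ℂ} (h : dist z m + dist w m < 2 * ‖m‖) :
    z + w ≠ 0 := by
  intro hzw
  have hm : 2 * m = -((z - m) + (w - m)) := by linear_combination hzw
  have htri := norm_add_le (z - m) (w - m)
  rw [← norm_neg, ← hm, norm_mul, Complex.norm_two] at htri
  rw [dist_eq_norm, dist_eq_norm] at h
  linarith

theorem mul_prod_add_ne_zero_of_mem_closedBall {ι : Type*} [Fintype ι] {m z : ℂ}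
    {f : ι → ℂ} (hm : m ≠ 0) (hf : f ∈ closedBall (fun _ => m) (‖m‖ / 4))
    (hz : z ∈ closedBall m (‖m‖ / 2)) :
    z * ∏ k, (z + f k) ≠ 0 := by
  have hm' := norm_pos_iff.2 hm
  rw [mem_closedBall] at hz
  refine mul_ne_zero (fun h => ?_) (prod_ne_zero_iff.2 fun k _ => ?_)
  · rw [h, dist_zero_left] at hz
    linarith
  · have := (dist_le_pi_dist f _ k).trans (mem_closedBall.1 hf)
    exact add_ne_zero_of_dist_add_dist_lt (by linarith)

noncomputable def expKernel {ι : Type*} [Fintype ι] (r : ℝ) (f : ι → ℂ) (z : ℂ) : ℂ :=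
  2 * cexp (-r * z) * (∏ k, f k ^ 2) / (z * ∏ k, (z + f k))

section expKernel

variable {ι : Type*} [Fintype ι] (r : ℝ)

theorem nodalWeight_mul_expKernel [DecidableEq ι] {f : ι → ℂ} {j : ι}
    (hden : f j * ∏ k, (f j + f k) ≠ 0) (hne : ∀ k ≠ j, f j ≠ f k) :
    nodalWeight univ f j * expKernel r f (f j)
      = cexp (-r * f j) * ∏ k ∈ univ.erase j, f k ^ 2 / (f j ^ 2 - f k ^ 2) := by
  have hadd : ∀ k, f j + f k ≠ 0 := fun k =>
    prod_ne_zero_iff.1 (right_ne_zero_of_mul hden) k (mem_univ k)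
  have hsub : ∏ k ∈ univ.erase j, (f j - f k) ≠ 0 :=
    prod_ne_zero_iff.2 fun k hk => sub_ne_zero.2 (hne k (ne_of_mem_erase hk))
  have hplus : ∏ k ∈ univ.erase j, (f j + f k) ≠ 0 := prod_ne_zero_iff.2 fun k _ => hadd k
  have hsq : ∀ k, f j ^ 2 - f k ^ 2 = (f j - f k) * (f j + f k) := fun k => by ring
  rw [nodalWeight, expKernel, ← mul_prod_erase univ (fun k => f k ^ 2) (mem_univ j),
    ← mul_prod_erase univ (fun k => f j + f k) (mem_univ j), prod_div_distrib,
    prod_congr rfl fun k _ => hsq k, prod_mul_distrib, prod_inv_distrib]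
  field_simp [left_ne_zero_of_mul hden, hadd j]
  ring

theorem continuousOn_expKernel {s : Set ((ι → ℂ) × ℂ)}
    (hs : ∀ p ∈ s, p.2 * ∏ k, (p.2 + p.1 k) ≠ 0) :
    ContinuousOn ↿(expKernel (ι := ι) r) s :=
  ContinuousOn.div (by fun_prop) (by fun_prop) hs

theorem differentiableOn_expKernel {f : ι → ℂ} {t : Set ℂ}
    (ht : ∀ z ∈ t, z * ∏ k, (z + f k) ≠ 0) :
    DifferentiableOn ℂ (expKernel r f) t :=
  DifferentiableOn.div (by fun_prop) (by fun_prop) ht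

theorem hasDerivAt_expKernel_const {m z : ℂ} (hz : z ≠ 0) (hzm : z + m ≠ 0) :
    HasDerivAt (expKernel r fun _ : Fin 3 => m)
      (expKernel r (fun _ : Fin 3 => m) z * (-r - z⁻¹ - 3 * (z + m)⁻¹)) z := by
  have hform : (expKernel r fun _ : Fin 3 => m)
      = fun z => 2 * m ^ 6 * cexp (-r * z) / (z * (z + m) ^ 3) := by
    funext z
    simp only [expKernel, prod_const, card_univ, Fintype.card_fin]
    ring
  rw [hform]
  have hnum : HasDerivAt (fun w : ℂ => 2 * m ^ 6 * cexp (-r * w))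
      (2 * m ^ 6 * (cexp (-r * z) * (-r * 1))) z :=
    (((hasDerivAt_id' z).const_mul (-(r : ℂ))).cexp).const_mul _
  have hden : HasDerivAt (fun w : ℂ => w * (w + m) ^ 3)
      (1 * (z + m) ^ 3 + z * ((3 : ℕ) * (z + m) ^ (3 - 1) * 1)) z :=
    (hasDerivAt_id' z).mul (((hasDerivAt_id' z).add_const m).pow 3)
  refine (hnum.div hden (mul_ne_zero hz (pow_ne_zero 3 hzm))).congr_deriv ?_
  field_simp
  push_cast
  ring

theorem iteratedDeriv_two_expKernel_const {m : ℂ} (hm : m ≠ 0) :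
    iteratedDeriv 2 (expKernel r fun _ : Fin 3 => m) m
      = 2 * (cexp (-m * r) * (1 + 5 / 8 * m * r + 1 / 8 * m ^ 2 * r ^ 2)) := by
  have h2m : m + m ≠ 0 := by rw [← two_mul]; exact mul_ne_zero two_ne_zero hm
  have hnear : ∀ᶠ z in 𝓝 m, z ≠ 0 ∧ z + m ≠ 0 := (eventually_ne_nhds hm).and
    ((continuous_id.add continuous_const).continuousAt.eventually_ne h2m)
  have hL : HasDerivAt (fun z : ℂ => -r - z⁻¹ - 3 * (z + m)⁻¹)
      (0 - -(m ^ 2)⁻¹ - 3 * (-(1 : ℂ) / (m + m) ^ 2)) m :=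
    ((hasDerivAt_const m _).sub (hasDerivAt_inv hm)).sub
      ((((hasDerivAt_id' m).add_const m).inv h2m).const_mul 3)
  rw [iteratedDeriv_two_eq_of_hasDerivAt_mul
    (hnear.mono fun z hz => hasDerivAt_expKernel_const r hz.1 hz.2) hL]
  simp only [expKernel, prod_const, card_univ, Fintype.card_fin]
  field_simp
  ring

end expKernel

theorem degenerate_triple_limit (m : ℂ) (hm : m ≠ 0) (r : ℝ) :
    Tendsto
      (fun f : Fin 3 → ℂ => ∑ j, Complex.exp (-(r : ℂ) * f j) *
          ∏ k ∈ univ.erase j, f k ^ 2 / (f k ^ 2 - f j ^ 2))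
      (𝓝[{f : Fin 3 → ℂ | (∀ i, f i ≠ 0) ∧ Function.Injective fun i => f i ^ 2}]
        (fun _ => m))
      (𝓝 (Complex.exp (-m * r) *
        (1 + 5 / 8 * m * r + 1 / 8 * m ^ 2 * r ^ 2))) := by
  set K := closedBall (fun _ : Fin 3 => m) (‖m‖ / 4)
  have hK : K ∈ 𝓝 fun _ => m := closedBall_mem_nhds _ (by positivity)
  have hKball : ∀ f ∈ K, ∀ i, f i ∈ ball m (‖m‖ / 2) := fun f hf i =>
    mem_ball.2 (((dist_le_pi_dist f _ i).trans (mem_closedBall.1 hf)).trans_lt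
      (by linarith [norm_pos_iff.2 hm]))
  have hlim := tendsto_sum_nodalWeight_smul_nhdsWithin_injective (G := expKernel r)
    (isCompact_closedBall _ _) hK hKball
    (fun f hf => differentiableOn_expKernel r fun z hz =>
      mul_prod_add_ne_zero_of_mem_closedBall hm hf hz)
    (continuousOn_expKernel r fun p hp =>
      mul_prod_add_ne_zero_of_mem_closedBall hm hp.1 (sphere_subset_closedBall hp.2))
  simp only [Fintype.card_fin, iteratedDeriv_two_expKernel_const r hm, Nat.reduceSub,
    Nat.factorial_two, Nat.cast_ofNat, smul_eq_mul,
    inv_mul_cancel_left₀ (two_ne_zero (α := ℂ))] at hlim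
  refine (hlim.mono_left (nhdsWithin_mono _ fun f (hf : _ ∧ _) =>
    hf.2.of_comp (f := (· ^ 2)))).congr' ?_
  filter_upwards [nhdsWithin_le_nhds hK, self_mem_nhdsWithin] with f hf hfS
  refine sum_congr rfl fun j _ => ?_
  rw [nodalWeight_mul_expKernel r
    (mul_prod_add_ne_zero_of_mem_closedBall hm hf (ball_subset_closedBall (hKball f hf j)))
    fun k hk => (hfS.2.of_comp (f := (· ^ 2))).ne hk.symm,
    prod_div_sub_comm (by simp) _ _ (f j ^ 2)]
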